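/- arXiv:2411.19839 — 4 statements merged into one kernel-verified Lean document; each statement's English description precedes it below -/
import Mathlib

section
/- Let κ be an infinite regular cardinal and let E be a closed subset of the generalized Baire space ^κκ. Then there exists a subset X ⊆ E of cardinality at most κ^{<κ} such that E \ X is closed and has no isolated points (i.e., E \ X is perfect, possibly empty). -/
open Cardinal Set Topology

/-- A node of the tree `^{<κ}λ`: a function from a proper initial segment of `K` to `L`. -/
abbrev GNode (K L : Type) [LinearOrder K] : Type := Σ a : K, (Set.Iio a → L)

/-- The initial-segment (extension) order on nodes. -/
def gnle {K L : Type} [LinearOrder K] (s t : GNode K L) : Prop :=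
  ∃ h : s.1 ≤ t.1, ∀ i : Set.Iio s.1, s.2 i = t.2 ⟨i.1, lt_of_lt_of_le i.2 h⟩

/-- The restriction of `x : K → L` to the initial segment below `a`. -/
def grestr {K L : Type} [LinearOrder K] (x : K → L) (a : K) : GNode K L :=
  ⟨a, fun i => x i.1⟩

/-- The basic open set `N_σ` determined by a node `σ`. -/
def gNbhd {K L : Type} [LinearOrder K] (s : GNode K L) : Set (K → L) :=
  {x | ∀ i : Set.Iio s.1, s.2 i = x i.1}

/-- The `<κ`-box topology on `^κλ`, generated by the basic open sets `N_σ`. -/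
def gtopo (K L : Type) [LinearOrder K] : TopologicalSpace (K → L) :=
  .generateFrom {U | ∃ s : GNode K L, U = gNbhd s}

/-- A subtree of `^{<κ}λ`: a set of nodes closed under initial segments. -/
def gIsTree {K L : Type} [LinearOrder K] (T : Set (GNode K L)) : Prop :=
  ∀ s t : GNode K L, gnle s t → t ∈ T → s ∈ T

/-- `[T]`: the set of `x : K → L` all of whose proper initial segments lie in `T`. -/
def gBr {K L : Type} [LinearOrder K] (T : Set (GNode K L)) : Set (K → L) :=
  {x | ∀ a : K, grestr x a ∈ T}

/-!
Fix `μ = κ^{<κ}`. The basic open sets `N_σ` form a basis of `^κκ` of size at most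
`κ · κ^{<κ} = μ`, since a node lives on some `Iio a` with `#(Iio a) < κ`. Remove from `E` every
point having a basic neighbourhood that meets `E` in at most `μ` points: at most `μ` basic sets
contribute at most `μ` points each, the removed set is relatively open, and a remaining point `x`
cannot be isolated, for otherwise a basic neighbourhood of `x` would meet `E` only in `x` and
removed points, i.e. in at most `μ` points, and `x` would have been removed.
-/

open TopologicalSpace

section CondensationPoints

universe u

variable {α : Type u} {b : Set (Set α)} {μ : Cardinal.{u}} {C : Set α}

def nonCondensationSet (b : Set (Set α)) (μ : Cardinal.{u}) (C : Set α) : Set α :=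
  ⋃ U ∈ {U ∈ b | #(U ∩ C : Set α) ≤ μ}, U

theorem mk_nonCondensationSet_inter_le (hμ : ℵ₀ ≤ μ) (hbμ : #b ≤ μ) :
    #(nonCondensationSet b μ C ∩ C : Set α) ≤ μ := by
  rw [nonCondensationSet, iUnion₂_inter]
  refine (mk_biUnion_le _ _).trans (mul_le_of_le hμ ?_ (ciSup_le' fun U => U.2.2))
  exact (mk_le_mk_of_subset (sep_subset _ _)).trans hbμ

variable [TopologicalSpace α]

theorem isOpen_nonCondensationSet (hb : IsTopologicalBasis b) :
    IsOpen (nonCondensationSet b μ C) :=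
  isOpen_biUnion fun _ hU => hb.isOpen hU.1

theorem preperfect_diff_nonCondensationSet (hb : IsTopologicalBasis b) (hμ : ℵ₀ ≤ μ)
    (hbμ : #b ≤ μ) : Preperfect (C \ nonCondensationSet b μ C) := by
  rw [preperfect_iff_nhds]
  intro x ⟨hxC, hxW⟩ U hU
  obtain ⟨B, hBb, hxB, hBU⟩ := hb.mem_nhds_iff.1 hU
  by_contra! hisolated
  have hBC : B ∩ C ⊆ {x} ∪ (nonCondensationSet b μ C ∩ C) := by
    rintro y ⟨hyB, hyC⟩
    by_cases hyW : y ∈ nonCondensationSet b μ C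
    · exact Or.inr ⟨hyW, hyC⟩
    · exact Or.inl (hisolated y ⟨hBU hyB, hyC, hyW⟩)
  have hsmall : #(B ∩ C : Set α) ≤ μ := calc
    #(B ∩ C : Set α) ≤ #({x} ∪ (nonCondensationSet b μ C ∩ C) : Set α) := mk_le_mk_of_subset hBC
    _ ≤ 1 + μ := (mk_union_le _ _).trans
      (add_le_add (mk_singleton x).le (mk_nonCondensationSet_inter_le hμ hbμ))
    _ = μ := add_eq_right hμ (one_le_aleph0.trans hμ)
  exact hxW (mem_biUnion ⟨hBb, hsmall⟩ hxB)

theorem exists_subset_mk_le_perfect_diff_of_isClosed (hb : IsTopologicalBasis b) (hμ : ℵ₀ ≤ μ)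
    (hbμ : #b ≤ μ) (hC : IsClosed C) : ∃ X ⊆ C, #X ≤ μ ∧ Perfect (C \ X) := by
  refine ⟨nonCondensationSet b μ C ∩ C, inter_subset_right,
    mk_nonCondensationSet_inter_le hμ hbμ, ?_⟩
  rw [sdiff_inter_self_eq_sdiff]
  exact ⟨hC.sdiff (isOpen_nonCondensationSet hb), preperfect_diff_nonCondensationSet hb hμ hbμ⟩

end CondensationPoints

section GeneralizedBaireSpace

variable {K L : Type} [LinearOrder K]

theorem isTopologicalBasis_gNbhd [Nonempty K] :
    @IsTopologicalBasis (K → L) (gtopo K L) (range gNbhd) := by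
  let _ := gtopo K L
  refine ⟨?_, ?_, ?_⟩
  · rintro _ ⟨s, rfl⟩ _ ⟨t, rfl⟩ x ⟨hxs, hxt⟩
    refine ⟨_, ⟨grestr x (max s.1 t.1), rfl⟩, fun _ => rfl, fun y hy => ⟨fun i => ?_, fun i => ?_⟩⟩
    · exact (hxs i).trans (hy ⟨i.1, i.2.trans_le (le_max_left _ _)⟩)
    · exact (hxt i).trans (hy ⟨i.1, i.2.trans_le (le_max_right _ _)⟩)
  · exact sUnion_eq_univ_iff.2 fun x => ⟨_, ⟨grestr x (Classical.arbitrary K), rfl⟩, fun _ => rfl⟩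
  · exact congrArg generateFrom (Set.ext fun _ => exists_congr fun _ => eq_comm)

theorem mk_gNode_le {μ : Cardinal} (hμ : ∀ a : K, #(Iio a) < μ) :
    #(GNode K L) ≤ #K * #L ^< μ := calc
  #(GNode K L) = sum fun a : K => #L ^ #(Iio a) := by simp only [mk_sigma, power_def]
  _ ≤ sum fun _ : K => #L ^< μ := sum_le_sum _ _ fun a => le_powerlt _ (hμ a)
  _ = #K * #L ^< μ := sum_const' _ _

end GeneralizedBaireSpace

/-- (Cantor–Bendixson for `^κκ`.)  If `κ` is an infinite regular cardinal
(`K` a well-order of type `κ.ord`) and `E ⊆ ^κκ` is closed, then there is `X ⊆ E` of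
cardinality at most `κ^{<κ}` such that `E \ X` is perfect (closed with no isolated
points), possibly empty. -/
theorem statement1 (κ : Cardinal) (hκ : κ.IsRegular)
    (K : Type) [LinearOrder K] [IsWellOrder K (· < ·)]
    (hK : Ordinal.type ((· < ·) : K → K → Prop) = κ.ord)
    (E : Set (K → K)) (hE : IsClosed[gtopo K K] E) :
    ∃ X ⊆ E, #X ≤ κ ^< κ ∧ @Perfect (K → K) (gtopo K K) (E \ X) := by
  let _ := gtopo K K
  have hKcard : #K = κ := by simpa using congrArg Ordinal.card hK
  have hIio (a : K) : #(Iio a) < κ := hKcard ▸ mk_Iio_lt a (by rw [hKcard, hK])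
  have : Nonempty K := mk_ne_zero_iff.1 (hKcard ▸ hκ.pos.ne')
  have hκle : κ ≤ κ ^< κ := by simpa using le_powerlt κ (hκ.nat_lt 1)
  have hμ : ℵ₀ ≤ κ ^< κ := hκ.aleph0_le.trans hκle
  refine exists_subset_mk_le_perfect_diff_of_isClosed isTopologicalBasis_gNbhd hμ ?_ hE
  calc #(range (gNbhd : GNode K K → _)) ≤ #(GNode K K) := mk_range_le
    _ ≤ #K * #K ^< κ := mk_gNode_le hIio
    _ ≤ κ ^< κ := by rw [hKcard]; exact mul_le_of_le hμ hκle le_rfl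
end

section
/- Let κ be an infinite regular cardinal with κ^{<κ} = κ. Then every closed subset E of ^κκ satisfies the ω-perfect set property: either |E| ≤ κ or E contains a nonempty perfect subset (a nonempty closed set with no isolated points). -/
open Cardinal Set Topology

/-!
The Cantor–Bendixson argument with `κ` in place of `ℵ₀`: since `κ^{<κ} = κ`, the space `^κκ`
has a basis of `κ` sets. Removing from `E` every basic open set that meets `E` in at most `κ`
points discards at most `κ · κ = κ` points, and what is left is closed and has no isolated
points, because each of its points lies only in basic sets meeting `E` in more than `κ` points.
-/

universe u

theorem mk_sUnion_inter_le {X : Type u} {κ : Cardinal.{u}} {E : Set X} {S : Set (Set X)}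
    (hκ : ℵ₀ ≤ κ) (hS : #S ≤ κ) (hSE : ∀ b ∈ S, #(b ∩ E : Set X) ≤ κ) :
    #(⋃₀ S ∩ E : Set X) ≤ κ := by
  rw [sUnion_eq_biUnion, iUnion₂_inter]
  calc #(⋃ b ∈ S, b ∩ E) ≤ #S * ⨆ b : S, #(b.1 ∩ E : Set X) := mk_biUnion_le _ _
    _ ≤ κ * κ := mul_le_mul' hS (ciSup_le' fun b => hSE b.1 b.2)
    _ = κ := mul_eq_self hκ

section CantorBendixson

open TopologicalSpace

variable {X : Type u} [TopologicalSpace X] {B : Set (Set X)} {κ : Cardinal.{u}} {E : Set X}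

theorem exists_union_perfect_of_isClosed_of_isTopologicalBasis (hB : IsTopologicalBasis B)
    (hBκ : #B ≤ κ) (hκ : ℵ₀ ≤ κ) (hE : IsClosed E) :
    ∃ V D : Set X, #V ≤ κ ∧ Perfect D ∧ E = V ∪ D := by
  set U := ⋃₀ {b ∈ B | #(b ∩ E : Set X) ≤ κ}
  have hUE : #(U ∩ E : Set X) ≤ κ :=
    mk_sUnion_inter_le hκ ((mk_le_mk_of_subset (sep_subset _ _)).trans hBκ) fun _ hb => hb.2
  refine ⟨U ∩ E, E \ U, hUE, ⟨hE.sdiff (isOpen_sUnion fun b hb => hB.isOpen hb.1), ?_⟩, ?_⟩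
  · rw [preperfect_iff_nhds]
    intro x hx V hV
    obtain ⟨b, hbB, hxb, hbV⟩ := hB.mem_nhds_iff.mp hV
    have hb_large : κ < #(b ∩ E : Set X) :=
      lt_of_not_ge fun hb => hx.2 (mem_sUnion_of_mem hxb ⟨hbB, hb⟩)
    by_contra! hisolated
    have hb_sub : b ∩ E ⊆ U ∩ E ∪ {x} := by
      rintro y ⟨hyb, hyE⟩
      by_cases hyU : y ∈ U
      · exact Or.inl ⟨hyU, hyE⟩
      · exact Or.inr (hisolated y ⟨hbV hyb, hyE, hyU⟩)
    refine hb_large.not_ge ?_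
    calc #(b ∩ E : Set X) ≤ #(U ∩ E ∪ {x} : Set X) := mk_le_mk_of_subset hb_sub
      _ ≤ #(U ∩ E : Set X) + #({x} : Set X) := mk_union_le _ _
      _ ≤ κ + 1 := by rw [mk_singleton]; exact add_le_add_left hUE 1
      _ = κ := add_one_eq hκ
  · rw [inter_comm, inter_union_sdiff]

theorem exists_perfect_nonempty_of_isClosed_of_lt_mk (hB : IsTopologicalBasis B)
    (hBκ : #B ≤ κ) (hκ : ℵ₀ ≤ κ) (hE : IsClosed E) (hEκ : κ < #E) :
    ∃ D ⊆ E, D.Nonempty ∧ Perfect D := by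
  obtain ⟨V, D, hV, hD, rfl⟩ := exists_union_perfect_of_isClosed_of_isTopologicalBasis hB hBκ hκ hE
  refine ⟨D, subset_union_right, nonempty_iff_ne_empty.mpr fun hD_empty => ?_, hD⟩
  rw [hD_empty, union_empty] at hEκ
  exact hEκ.not_ge hV

end CantorBendixson

theorem isTopologicalBasis_range_gNbhd (K L : Type) [LinearOrder K] [Nonempty K] :
    @TopologicalSpace.IsTopologicalBasis (K → L) (gtopo K L) (range gNbhd) := by
  let := gtopo K L
  refine ⟨?_, eq_univ_of_forall fun x => ⟨_, ⟨grestr x (Classical.arbitrary K), rfl⟩, fun _ => rfl⟩,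
    congrArg _ (ext fun _ => exists_congr fun _ => eq_comm)⟩
  rintro _ ⟨σ, rfl⟩ _ ⟨τ, rfl⟩ x ⟨hxσ, hxτ⟩
  refine ⟨gNbhd (grestr x (max σ.1 τ.1)), ⟨_, rfl⟩, fun _ => rfl, subset_inter ?_ ?_⟩
  · exact fun y hy i => (hxσ i).trans (hy ⟨i.1, i.2.trans_le (le_max_left _ _)⟩)
  · exact fun y hy i => (hxτ i).trans (hy ⟨i.1, i.2.trans_le (le_max_right _ _)⟩)

theorem mk_eq_of_type_eq_ord {κ : Cardinal} {K : Type} [LinearOrder K] [IsWellOrder K (· < ·)]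
    (hK : Ordinal.type ((· < ·) : K → K → Prop) = κ.ord) : #K = κ := by
  rw [← Ordinal.card_type (· < ·), hK, card_ord]

theorem mk_gNode_le_s2 {κ : Cardinal} (hκ : ℵ₀ ≤ κ) (hpl : κ ^< κ = κ)
    {K L : Type} [LinearOrder K] [IsWellOrder K (· < ·)]
    (hK : Ordinal.type ((· < ·) : K → K → Prop) = κ.ord) (hL : #L ≤ κ) :
    #(GNode K L) ≤ κ := by
  have hKκ : #K = κ := mk_eq_of_type_eq_ord hK
  have hIio : ∀ a : K, #(Iio a) < κ := fun a =>
    hKκ ▸ mk_Iio_lt a (by rw [hKκ, hK])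
  calc #(GNode K L) = sum fun a : K => #(Iio a → L) := mk_sigma _
    _ ≤ sum fun _ : K => κ := sum_le_sum _ _ fun a => by
        rw [← power_def]
        exact (power_le_power_right hL).trans ((le_powerlt κ (hIio a)).trans hpl.le)
    _ = κ := by rw [sum_const', hKκ, mul_eq_self hκ]

/-- If `κ` is an infinite regular cardinal with `κ^{<κ} = κ` then every
closed `E ⊆ ^κκ` satisfies the ω-perfect set property: `|E| ≤ κ` or `E` contains a
nonempty perfect subset. -/
theorem statement2 (κ : Cardinal) (hκ : κ.IsRegular) (hpl : κ ^< κ = κ)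
    (K : Type) [LinearOrder K] [IsWellOrder K (· < ·)]
    (hK : Ordinal.type ((· < ·) : K → K → Prop) = κ.ord)
    (E : Set (K → K)) (hE : IsClosed[gtopo K K] E) :
    #E ≤ κ ∨ ∃ C ⊆ E, C.Nonempty ∧ @Perfect (K → K) (gtopo K K) C := by
  let := gtopo K K
  have hKκ : #K = κ := mk_eq_of_type_eq_ord hK
  have : Nonempty K := mk_ne_zero_iff.mp (hKκ ▸ hκ.pos.ne')
  have hbasis_card : #(range (gNbhd (K := K) (L := K))) ≤ κ :=
    mk_range_le.trans (mk_gNode_le_s2 hκ.aleph0_le hpl hK hKκ.le)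
  rcases le_or_gt #E κ with hEκ | hEκ
  · exact Or.inl hEκ
  · exact Or.inr (exists_perfect_nonempty_of_isClosed_of_lt_mk (isTopologicalBasis_range_gNbhd K K)
      hbasis_card hκ.aleph0_le hE hEκ)
end

section
/- Let κ be a regular uncountable cardinal that is not a strong limit cardinal, and let λ < κ be the least cardinal with 2^λ ≥ κ. Then no κ-tree T (a tree of height κ all of whose levels have size < κ) contains a copy of the complete binary tree ^{≤λ}2 of height λ+1; that is, there is no map ι : ^{≤λ}2 → T that is strictly order preserving and maps incomparable nodes to incomparable nodes. -/
open Cardinal Set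

/-- The height of a node `t` of a tree: the order type of its set of strict predecessors. -/
noncomputable def treeHt {T : Type} [PartialOrder T]
    (hwo : ∀ t : T, IsWellOrder {s : T // s < t} fun a b => (a : T) < (b : T)) (t : T) :
    Ordinal :=
  @Ordinal.type {s : T // s < t} (fun a b => (a : T) < (b : T)) (hwo t)

/-- A node of the binary tree: a function from a proper initial segment of the ordinals
to `Bool`. -/
abbrev BNode : Type 1 := Σ α : Ordinal, (Set.Iio α → Bool)

/-- The initial-segment order on binary-tree nodes. -/
def bnle (s t : BNode) : Prop :=
  ∃ h : s.1 ≤ t.1, ∀ i : Set.Iio s.1, s.2 i = t.2 ⟨i.1, lt_of_lt_of_le i.2 h⟩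

/-!
By minimality of `λ` each level `α < λ` of `^{<λ}2` has `2^|α| < κ` nodes, so by regularity the
whole of `^{<λ}2` has fewer than `κ` nodes and its image lies below some level `δ < κ`. Cutting the
image of each of the `2^λ` branches of length `λ` at level `δ` gives a node of height `≤ δ` lying
above the images of all proper initial segments of the branch. Two different branches split at
some `α < λ`; the images of their restrictions to `α + 1` are incomparable, so the cut nodes differ.
Hence `κ ≤ 2^λ ≤ #{t | ht t ≤ δ} < κ`.
-/

def restrictNode {o : Ordinal} (f : Iio o → Bool) (α : Ordinal) (hα : α ≤ o) :
    {s : BNode // s.1 ≤ o} :=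
  ⟨⟨α, fun i => f ⟨i.1, i.2.trans_le hα⟩⟩, hα⟩

lemma bnle_restrictNode {o : Ordinal} (f : Iio o → Bool) {α β : Ordinal} (hα : α ≤ o)
    (hβ : β ≤ o) (hαβ : α ≤ β) : bnle (restrictNode f α hα).1 (restrictNode f β hβ).1 :=
  ⟨hαβ, fun _ => rfl⟩

lemma not_bnle_restrictNode_succ {o : Ordinal} {f g : Iio o → Bool} {i : Iio o} (hfg : f i ≠ g i)
    (hi : Order.succ i.1 ≤ o) :
    ¬ bnle (restrictNode f (Order.succ i.1) hi).1 (restrictNode g (Order.succ i.1) hi).1 :=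
  fun ⟨_, hagree⟩ => hfg (hagree ⟨i.1, Order.lt_succ i.1⟩)

lemma mk_bnode_lt_lift {κ lam : Cardinal} (hκ : κ.IsRegular) (hlt : lam < κ)
    (hmin : ∀ μ < lam, 2 ^ μ < κ) : #{s : BNode // s.1 < lam.ord} < lift.{1} κ := by
  rw [mk_congr (Equiv.subtypeSigmaEquiv (fun α : Ordinal => Iio α → Bool) (· < lam.ord)), mk_sigma]
  refine sum_lt_lift_of_isRegular.{1, 1} hκ.lift ?_ fun α => ?_
  · rw [lift_id]
    change #(Iio lam.ord) < _
    rw [mk_Iio_ordinal, card_ord, lift_lt]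
    exact hlt
  · rw [mk_arrow, mk_Iio_ordinal, mk_bool, lift_uzero, lift_two, ← lift_two_power, lift_lt]
    exact hmin _ (lt_ord.1 α.2)

section Tree

variable {T : Type} [PartialOrder T]
  (hwo : ∀ t : T, IsWellOrder {s : T // s < t} fun a b => (a : T) < (b : T))

lemma treeHt_eq_typein {s t : T} (h : s < t) :
    treeHt hwo s
      = @Ordinal.typein {x : T // x < t} (fun a b => (a : T) < (b : T)) (hwo t) ⟨s, h⟩ := by
  let := hwo t
  rw [← @Ordinal.type_subrel _ (fun a b : {x : T // x < t} => (a : T) < (b : T)) (hwo t) ⟨s, h⟩]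
  exact @RelIso.ordinalType_congr _ _ _ _ (hwo s) _
    ⟨⟨fun x => ⟨⟨x.1, x.2.trans h⟩, x.2⟩, fun b => ⟨b.1.1, b.2⟩, fun _ => rfl, fun _ => rfl⟩,
      Iff.rfl⟩

lemma treeHt_lt_treeHt {s t : T} (h : s < t) : treeHt hwo s < treeHt hwo t := by
  rw [treeHt_eq_typein hwo h]
  exact @Ordinal.typein_lt_type _ _ (hwo t) ⟨s, h⟩

lemma exists_le_treeHt_eq (t : T) {o : Ordinal} (ho : o ≤ treeHt hwo t) :
    ∃ p ≤ t, treeHt hwo p = o := by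
  obtain rfl | ho := ho.eq_or_lt
  · exact ⟨t, le_rfl, rfl⟩
  · obtain ⟨p, rfl⟩ := @Ordinal.typein_surj _ _ (hwo t) o ho
    exact ⟨p.1, p.2.le, treeHt_eq_typein hwo p.2⟩

include hwo in
lemma le_or_ge_of_le_of_le {x y t : T} (hx : x ≤ t) (hy : y ≤ t) : x ≤ y ∨ y ≤ x := by
  obtain rfl | hx := hx.eq_or_lt
  · exact .inr hy
  obtain rfl | hy := hy.eq_or_lt
  · exact .inl hx.le
  let := hwo t
  rcases trichotomous_of (fun a b : {s : T // s < t} => (a : T) < (b : T)) ⟨x, hx⟩ ⟨y, hy⟩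
    with h | h | h
  · exact .inl h.le
  · exact .inl (congrArg Subtype.val h).le
  · exact .inr h.le

lemma le_of_le_of_le_of_treeHt_le {x y t : T} (hx : x ≤ t) (hy : y ≤ t)
    (hxy : treeHt hwo x ≤ treeHt hwo y) : x ≤ y := by
  rcases le_or_ge_of_le_of_le hwo hx hy with hxy' | hyx
  · exact hxy'
  obtain rfl | hyx := hyx.eq_or_lt
  · exact le_rfl
  · exact absurd (treeHt_lt_treeHt hwo hyx) hxy.not_gt

lemma mk_treeHt_le_lt {κ : Cardinal} (hκ : κ.IsRegular) {δ : Ordinal} (hδ : δ < κ.ord)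
    (hsmall : ∀ o ≤ δ, #{t : T // treeHt hwo t = o} < κ) :
    #{t : T // treeHt hwo t ≤ δ} < κ := by
  have hunion : {t : T | treeHt hwo t ≤ δ} = ⋃ o : Iic δ, {t : T | treeHt hwo t = o} := by
    ext t
    simp
  have hIic : #(Iic δ) < lift.{1} κ := by
    rw [← Order.Iio_succ, Cardinal.mk_Iio_ordinal, lift_lt, ← lt_ord]
    exact (isSuccLimit_ord hκ.aleph0_le).succ_lt hδ
  rw [← lift_lt.{0, 1}]
  calc lift.{1} #{t : T // treeHt hwo t ≤ δ}
      = lift.{1} #(⋃ o : Iic δ, {t : T | treeHt hwo t = o}) := by rw [← hunion]; rfl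
    _ ≤ sum fun o : Iic δ => #{t : T | treeHt hwo t = o} := mk_iUnion_le_sum_mk_lift
    _ = sum fun o : Iic δ => lift.{1} #{t : T | treeHt hwo t = o} := by rw [← lift_sum, lift_id]
    _ < lift.{1} κ := sum_lt_lift_of_isRegular.{1, 1} hκ.lift (by rwa [lift_id]) fun o =>
        lift_lt.2 (hsmall o o.2)

lemma exists_treeHt_le_of_mk_lt {κ : Cardinal} (hκ : κ.IsRegular)
    (hht : ∀ t, treeHt hwo t < κ.ord) (S : Set T) (hS : #S < κ) :
    ∃ δ < κ.ord, ∀ t ∈ S, treeHt hwo t ≤ δ := by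
  refine ⟨⨆ t : S, treeHt hwo t, Ordinal.iSup_lt_of_lt_cof (by rwa [hκ.cof_ord]) fun t => hht t,
    fun t ht => ?_⟩
  exact le_ciSup (f := fun t : S => treeHt hwo t)
    ⟨κ.ord, by rintro _ ⟨t, rfl⟩; exact (hht t).le⟩ ⟨t, ht⟩

theorem two_power_card_le_mk_treeHt_le {o : Ordinal} (ho : Order.IsSuccLimit o)
    (ι : {s : BNode // s.1 ≤ o} → T)
    (hmono : ∀ s t : {s : BNode // s.1 ≤ o}, bnle s.1 t.1 → s ≠ t → ι s < ι t)
    (hinc : ∀ s t : {s : BNode // s.1 ≤ o}, ¬ bnle s.1 t.1 → ¬ bnle t.1 s.1 →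
      ¬ (ι s ≤ ι t) ∧ ¬ (ι t ≤ ι s))
    {δ : Ordinal} (hδ : ∀ s : {s : BNode // s.1 ≤ o}, s.1.1 < o → treeHt hwo (ι s) ≤ δ) :
    2 ^ o.card ≤ #{t : T // treeHt hwo t ≤ δ} := by
  have hF : ∀ f : Iio o → Bool, ∃ p ≤ ι (restrictNode f o le_rfl),
      treeHt hwo p = min δ (treeHt hwo (ι (restrictNode f o le_rfl))) :=
    fun f => exists_le_treeHt_eq hwo _ (min_le_right _ _)
  choose F hF_le hF_ht using hF
  have hbelow (f : Iio o → Bool) (i : Iio o) :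
      ι (restrictNode f (Order.succ i.1) (ho.succ_lt i.2).le) ≤ F f := by
    have hlt : ι (restrictNode f (Order.succ i.1) (ho.succ_lt i.2).le)
        < ι (restrictNode f o le_rfl) :=
      hmono _ _ (bnle_restrictNode f _ _ (ho.succ_lt i.2).le)
        fun h => (ho.succ_lt i.2).ne (congrArg (·.1.1) h)
    refine le_of_le_of_le_of_treeHt_le hwo hlt.le (hF_le f) ?_
    rw [hF_ht]
    exact le_min (hδ _ (ho.succ_lt i.2)) (treeHt_lt_treeHt hwo hlt).le
  have hinj : Function.Injective fun f : Iio o → Bool =>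
      (⟨F f, (hF_ht f).trans_le (min_le_left _ _)⟩ : {t : T // treeHt hwo t ≤ δ}) := by
    intro f g hfg
    by_contra hne
    obtain ⟨i, hi⟩ := Function.ne_iff.mp hne
    obtain ⟨hfg', hgf'⟩ := hinc _ _ (not_bnle_restrictNode_succ hi _)
      (not_bnle_restrictNode_succ (Ne.symm hi) _)
    have hFfg : F g = F f := congrArg Subtype.val hfg.symm
    rcases le_or_ge_of_le_of_le hwo (hbelow f i) ((hbelow g i).trans_eq hFfg) with h | h
    exacts [hfg' h, hgf' h]
  have := lift_mk_le_lift_mk_of_injective hinj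
  rwa [mk_arrow, mk_Iio_ordinal, mk_bool, lift_uzero, lift_uzero, lift_two, ← lift_two_power,
    lift_le] at this

end Tree

theorem statement3_general (κ lam : Cardinal) (hκ : κ.IsRegular)
    (hlt : lam < κ) (hge : κ ≤ 2 ^ lam) (hmin : ∀ μ : Cardinal, μ < lam → 2 ^ μ < κ)
    (T : Type) [PartialOrder T]
    (hwo : ∀ t : T, IsWellOrder {s : T // s < t} fun a b => (a : T) < (b : T))
    (hht : ∀ t : T, treeHt hwo t < κ.ord)
    (hsmall : ∀ o : Ordinal, #{t : T // treeHt hwo t = o} < κ) :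
    ¬ ∃ ι : {s : BNode // s.1 ≤ lam.ord} → T,
        (∀ s t : {s : BNode // s.1 ≤ lam.ord}, bnle s.1 t.1 → s ≠ t → ι s < ι t) ∧
        (∀ s t : {s : BNode // s.1 ≤ lam.ord}, ¬ bnle s.1 t.1 → ¬ bnle t.1 s.1 →
          ¬ (ι s ≤ ι t) ∧ ¬ (ι t ≤ ι s)) := by
  rintro ⟨ι, hmono, hinc⟩
  have hlam : ℵ₀ ≤ lam := by
    by_contra! hfin
    exact (hge.trans_lt (power_lt_aleph0 natCast_lt_aleph0 hfin)).not_ge hκ.aleph0_le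
  have hshort : #(range fun s : {s : BNode // s.1 < lam.ord} => ι ⟨s.1, s.2.le⟩) < κ := by
    rw [← lift_lt.{0, 1}]
    exact mk_range_le_lift.trans_lt (by rw [lift_uzero]; exact mk_bnode_lt_lift hκ hlt hmin)
  obtain ⟨δ, hδκ, hδ⟩ := exists_treeHt_le_of_mk_lt hwo hκ hht _ hshort
  have hleaves := two_power_card_le_mk_treeHt_le hwo (isSuccLimit_ord hlam) ι hmono hinc
    fun s hs => hδ _ ⟨⟨s.1, hs⟩, rfl⟩
  rw [card_ord] at hleaves
  exact (hge.trans hleaves).not_gt (mk_treeHt_le_lt hwo hκ hδκ fun o _ => hsmall o)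

/-- Let `κ` be a regular uncountable cardinal that is not a strong
limit, and let `λ` be the least cardinal with `2^λ ≥ κ`.  Then no `κ`-tree contains a
copy of the complete binary tree `^{≤λ}2` of height `λ+1`: there is no map
`ι : ^{≤λ}2 → T` which is strictly order preserving and maps incomparable nodes to
incomparable nodes. -/
theorem statement3 (κ lam : Cardinal) (hκ : κ.IsRegular) (hunc : ℵ₀ < κ)
    (hlt : lam < κ) (hge : κ ≤ 2 ^ lam) (hmin : ∀ μ : Cardinal, μ < lam → 2 ^ μ < κ)
    (T : Type) [PartialOrder T]
    (hwo : ∀ t : T, IsWellOrder {s : T // s < t} fun a b => (a : T) < (b : T))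
    (hht : ∀ t : T, treeHt hwo t < κ.ord)
    (hlev : ∀ o : Ordinal, o < κ.ord → ∃ t : T, treeHt hwo t = o)
    (hsmall : ∀ o : Ordinal, #{t : T // treeHt hwo t = o} < κ) :
    ¬ ∃ ι : {s : BNode // s.1 ≤ lam.ord} → T,
        (∀ s t : {s : BNode // s.1 ≤ lam.ord}, bnle s.1 t.1 → s ≠ t → ι s < ι t) ∧
        (∀ s t : {s : BNode // s.1 ≤ lam.ord}, ¬ bnle s.1 t.1 → ¬ bnle t.1 s.1 →
          ¬ (ι s ≤ ι t) ∧ ¬ (ι t ≤ ι s)) :=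
  statement3_general κ lam hκ hlt hge hmin T hwo hht hsmall
end

section
/- Let η be a countable limit ordinal, let T be a subtree of ^{≤η}ω₁ (binary-branching not assumed) of height η+1 that does not contain a copy of ^{<ω+1}2, and let D be a countable set of cofinal branches through T↾η (elements of ^ηω₁ all of whose proper initial segments lie in T) that are not already in T. Then the tree T ∪ D still does not contain a copy of ^{<ω+1}2, where a copy means a map from ^{<ω+1}2 that is strictly order preserving and preserves incomparability. -/
open Cardinal Set

/-- The tree `^{<ω+1}2` of binary sequences of length at most `ω`. -/
abbrev Bt : Type := List Bool ⊕ (ℕ → Bool)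

/-- The initial-segment order on `^{<ω+1}2`. -/
def btLE : Bt → Bt → Prop
  | Sum.inl l, Sum.inl l' => l <+: l'
  | Sum.inl l, Sum.inr x => ∀ i : Fin l.length, l.get i = x i.1
  | Sum.inr x, Sum.inr y => x = y
  | Sum.inr _, Sum.inl _ => False

/-- A node with ordinal domain and values in `W`: an element of `^{<Ord}W`. -/
abbrev ONode (W : Type) : Type 1 := Σ α : Ordinal, (Set.Iio α → W)

/-- The initial-segment order on such nodes. -/
def onle {W : Type} (s t : ONode W) : Prop :=
  ∃ h : s.1 ≤ t.1, ∀ i : Set.Iio s.1, s.2 i = t.2 ⟨i.1, lt_of_lt_of_le i.2 h⟩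

/-- `S` contains a copy of `^{<ω+1}2`: a strictly order preserving, incomparability
preserving map from `^{<ω+1}2` into `S`. -/
def HasCopy {W : Type} (S : Set (ONode W)) : Prop :=
  ∃ ι : Bt → ONode W, (∀ s : Bt, ι s ∈ S) ∧
    (∀ s t : Bt, btLE s t → s ≠ t → onle (ι s) (ι t) ∧ ι s ≠ ι t) ∧
    (∀ s t : Bt, ¬ btLE s t → ¬ btLE t s → ¬ onle (ι s) (ι t) ∧ ¬ onle (ι t) (ι s))

/-! Nodes of `T ∪ D` with a proper extension have height `< η`, so the finite part of a copy lies
in `T`, and only countably many of its branches are sent into `D`. Interleaving every node of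
`^{<ω+1}2` with a sequence that diagonalizes against those countably many branches gives a
self-embedding of `^{<ω+1}2` whose composition with the copy lies entirely in `T`. -/

theorem onle_refl {W : Type} (s : ONode W) : onle s s := ⟨le_rfl, fun _ => rfl⟩

theorem onle.fst_lt_of_ne {W : Type} {s t : ONode W} (h : onle s t) (hne : s ≠ t) :
    s.1 < t.1 := by
  obtain ⟨hle, hagree⟩ := h
  refine hle.lt_of_ne fun heq => hne ?_
  obtain ⟨α, f⟩ := s
  obtain ⟨β, g⟩ := t
  dsimp only at heq hagree
  subst heq
  exact Sigma.ext rfl (heq_of_eq (funext hagree))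

theorem List.prefix_iff_getD {α : Type*} {l l' : List α} (a : α) :
    l <+: l' ↔ l.length ≤ l'.length ∧ ∀ k < l.length, l.getD k a = l'.getD k a := by
  rw [List.prefix_iff_getElem]
  refine ⟨fun ⟨hlen, h⟩ => ⟨hlen, fun k hk => ?_⟩,
    fun ⟨hlen, h⟩ => ⟨hlen, fun k hk => ?_⟩⟩
  · simp [hk, hk.trans_le hlen, h k hk]
  · simpa [List.getD_eq_getElem, hk, hk.trans_le hlen] using h k hk

theorem btLE_inl_inr_iff {l : List Bool} {x : ℕ → Bool} :
    btLE (.inl l) (.inr x) ↔ ∀ k < l.length, l.getD k false = x k := by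
  simp only [btLE, List.get_eq_getElem]
  exact ⟨fun h k hk => by simpa [List.getD_eq_getElem, hk] using h ⟨k, hk⟩,
    fun h i => by simpa [List.getD_eq_getElem] using h i i.2⟩

section Interleave

def interleave (x d : ℕ → Bool) (k : ℕ) : Bool :=
  if k % 2 = 0 then x (k / 2) else d (k / 2)

variable {x y d : ℕ → Bool}

@[simp]
theorem interleave_two_mul (k : ℕ) : interleave x d (2 * k) = x k := by
  simp [interleave]

@[simp]
theorem interleave_two_mul_add_one (k : ℕ) : interleave x d (2 * k + 1) = d k := by
  rw [interleave, if_neg (by omega), show (2 * k + 1) / 2 = k by omega]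

theorem interleave_eqOn_iff {n : ℕ} :
    (∀ i < 2 * n, interleave x d i = interleave y d i) ↔ ∀ k < n, x k = y k := by
  refine ⟨fun h k hk => by simpa using h (2 * k) (by omega), fun h i hi => ?_⟩
  obtain ⟨k, rfl | rfl⟩ := Nat.even_or_odd' i
  · simpa using h k (by omega)
  · simp

theorem interleave_left_injective : Function.Injective fun x => interleave x d :=
  fun x y h => funext fun k => by simpa using congrFun h (2 * k)

def interleaveList (l : List Bool) (d : ℕ → Bool) : List Bool :=
  List.ofFn fun i : Fin (2 * l.length) => interleave (l.getD · false) d i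

@[simp]
theorem length_interleaveList (l : List Bool) : (interleaveList l d).length = 2 * l.length := by
  simp [interleaveList]

theorem getD_interleaveList {l : List Bool} {i : ℕ} (hi : i < 2 * l.length) :
    (interleaveList l d).getD i false = interleave (l.getD · false) d i := by
  simp [interleaveList, hi]

theorem interleaveList_prefix_iff {l l' : List Bool} :
    interleaveList l d <+: interleaveList l' d ↔ l <+: l' := by
  have hvalues (hlen : l.length ≤ l'.length) :
      (∀ i < 2 * l.length, (interleaveList l d).getD i false = (interleaveList l' d).getD i false)
        ↔ ∀ k < l.length, l.getD k false = l'.getD k false := by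
    refine Iff.trans (forall₂_congr fun i hi => ?_) (interleave_eqOn_iff (d := d))
    rw [getD_interleaveList hi, getD_interleaveList (by omega)]
  rw [List.prefix_iff_getD false, List.prefix_iff_getD false, length_interleaveList,
    length_interleaveList]
  exact ⟨fun ⟨hlen, h⟩ => ⟨by omega, (hvalues (by omega)).1 h⟩,
    fun ⟨hlen, h⟩ => ⟨by omega, (hvalues hlen).2 h⟩⟩

theorem interleaveList_btLE_iff {l : List Bool} :
    btLE (.inl (interleaveList l d)) (.inr (interleave x d)) ↔ btLE (.inl l) (.inr x) := by
  rw [btLE_inl_inr_iff, btLE_inl_inr_iff, length_interleaveList]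
  refine Iff.trans (forall₂_congr fun i hi => ?_) (interleave_eqOn_iff (d := d))
  rw [getD_interleaveList hi]

theorem interleave_notMem_range (c : ℕ → ℕ → Bool) (x : ℕ → Bool) :
    interleave x (fun j => !c j (2 * j + 1)) ∉ Set.range c := by
  rintro ⟨j, hj⟩
  simpa using congrFun hj (2 * j + 1)

end Interleave

theorem btLE_refl : ∀ s : Bt, btLE s s
  | .inl l => List.prefix_refl l
  | .inr _ => rfl

theorem btLE_antisymm : ∀ {s t : Bt}, btLE s t → btLE t s → s = t
  | .inl _, .inl _, h, h' => congrArg _ (h.eq_of_length (h.length_le.antisymm h'.length_le))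
  | .inr _, .inr _, h, _ => congrArg _ h

def interleaveBt (d : ℕ → Bool) : Bt → Bt
  | .inl l => .inl (interleaveList l d)
  | .inr x => .inr (interleave x d)

theorem btLE_interleaveBt_iff {d : ℕ → Bool} :
    ∀ {s t : Bt}, btLE (interleaveBt d s) (interleaveBt d t) ↔ btLE s t
  | .inl _, .inl _ => interleaveList_prefix_iff
  | .inl _, .inr _ => interleaveList_btLE_iff
  | .inr _, .inl _ => Iff.rfl
  | .inr _, .inr _ => interleave_left_injective.eq_iff

theorem injective_of_btLE_iff {e : Bt → Bt} (he : ∀ {s t}, btLE (e s) (e t) ↔ btLE s t) :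
    Function.Injective e := fun _ _ h =>
  btLE_antisymm (he.1 (h ▸ btLE_refl _)) (he.1 (h ▸ btLE_refl _))

section CopyMap

variable {W : Type}

/-- `HasCopy S` unfolds to `∃ ι, (∀ s, ι s ∈ S) ∧ IsCopyMap ι`. -/
def IsCopyMap (ι : Bt → ONode W) : Prop :=
  (∀ s t : Bt, btLE s t → s ≠ t → onle (ι s) (ι t) ∧ ι s ≠ ι t) ∧
    (∀ s t : Bt, ¬ btLE s t → ¬ btLE t s → ¬ onle (ι s) (ι t) ∧ ¬ onle (ι t) (ι s))

variable {ι : Bt → ONode W}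

theorem IsCopyMap.comp (hι : IsCopyMap ι) {e : Bt → Bt}
    (he : ∀ {s t}, btLE (e s) (e t) ↔ btLE s t) : IsCopyMap (ι ∘ e) :=
  ⟨fun _ _ hst hne => hι.1 _ _ (he.2 hst) ((injective_of_btLE_iff he).ne hne),
    fun _ _ hst hts => hι.2 _ _ (mt he.1 hst) (mt he.1 hts)⟩

theorem IsCopyMap.fst_lt_append (hι : IsCopyMap ι) (l : List Bool) :
    (ι (.inl l)).1 < (ι (.inl (l ++ [true]))).1 :=
  let ⟨hle, hne⟩ := hι.1 (.inl l) (.inl (l ++ [true])) (List.prefix_append l [true]) (by simp)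
  hle.fst_lt_of_ne hne

theorem IsCopyMap.injective_inr (hι : IsCopyMap ι) : Function.Injective (ι ∘ Sum.inr) :=
  fun x y (h : ι (.inr x) = ι (.inr y)) => by_contra fun hne =>
    (hι.2 (.inr x) (.inr y) hne (Ne.symm hne)).1 (h ▸ onle_refl _)

end CopyMap

theorem statement8_general (W : Type)
    (η : Ordinal)
    (T : Set (ONode W))
    (hdom : ∀ s ∈ T, s.1 ≤ η)
    (hnocopy : ¬ HasCopy T)
    (D : Set ((Set.Iio η) → W)) (hDct : D.Countable) :
    ¬ HasCopy (T ∪ {s : ONode W | ∃ b ∈ D, s = ⟨η, b⟩}) := by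
  rintro ⟨ι, hmem, hι⟩
  change IsCopyMap ι at hι
  have hheight (s : Bt) : (ι s).1 ≤ η := by
    rcases hmem s with hs | ⟨b, -, hb⟩
    exacts [hdom _ hs, hb ▸ le_rfl]
  have hfin (l : List Bool) : ι (.inl l) ∈ T := (hmem _).resolve_right fun ⟨b, _, hb⟩ =>
    ((hι.fst_lt_append l).trans_le (hheight _)).ne (by rw [hb])
  have hbad : {x | ι (.inr x) ∉ T}.Countable :=
    ((hDct.image fun b => (⟨η, b⟩ : ONode W)).preimage hι.injective_inr).mono fun x hx => by
      obtain ⟨b, hb, he⟩ := (hmem _).resolve_left hx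
      exact ⟨b, hb, he.symm⟩
  obtain ⟨c, hc⟩ := Set.countable_iff_exists_subset_range.mp hbad
  refine hnocopy ⟨ι ∘ interleaveBt fun j => !c j (2 * j + 1), fun s => ?_,
    hι.comp btLE_interleaveBt_iff⟩
  cases s with
  | inl l => exact hfin _
  | inr x => exact by_contra fun hx => interleave_notMem_range c x (hc hx)

/-- Let `η` be a countable limit ordinal, `T` a subtree of `^{≤η}ω₁` of
height `η+1` containing no copy of `^{<ω+1}2`, and let `D` be a countable set of cofinal
branches through `T↾η` that are not already in `T`.  Then `T ∪ D` still contains no copy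
of `^{<ω+1}2`. -/
theorem statement8 (W : Type) (hW : #W = aleph 1)
    (η : Ordinal) (hηlim : Order.IsSuccLimit η) (hηct : η.card ≤ ℵ₀)
    (T : Set (ONode W))
    (hdom : ∀ s ∈ T, s.1 ≤ η)
    (htree : ∀ s t : ONode W, onle s t → t ∈ T → s ∈ T)
    (hheight : ∀ α : Ordinal, α ≤ η → ∃ s ∈ T, s.1 = α)
    (hnocopy : ¬ HasCopy T)
    (D : Set ((Set.Iio η) → W)) (hDct : D.Countable)
    (hDbr : ∀ b ∈ D, ∀ α : Ordinal, ∀ hα : α < η,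
      (⟨α, fun i => b ⟨i.1, lt_trans i.2 hα⟩⟩ : ONode W) ∈ T)
    (hDnew : ∀ b ∈ D, (⟨η, b⟩ : ONode W) ∉ T) :
    ¬ HasCopy (T ∪ {s : ONode W | ∃ b ∈ D, s = ⟨η, b⟩}) :=
  statement8_general W η T hdom hnocopy D hDct
end
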